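/- Let G be bipartite with parts V_B and V_S, and let α^top be the message vector with α^top_{i→j'} = W and α^top_{j'→i} = 0 for all edges (i,j'), i ∈ V_B, j' ∈ V_S. Then the natural dynamics started from α^top converges to a fixed point α^{*,up}, and this fixed point is maximal in the bipartite partial ordering: α^{*,up} ⪰ α* for every fixed point α* ∈ [0,W]^{2|E|} of the natural dynamics. -/

import Mathlib

open Finset Filter Topology

/-- The offer `m_{i→j}` computed from message vector `α`:
`m_{i→j} = (w_{ij} − α_{i→j})₊ − (1/2)(w_{ij} − α_{i→j} − α_{j→i})₊`. -/
noncomputable def offer {V : Type*} (w α : V → V → ℝ) (i j : V) : ℝ :=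
  max (w i j - α i j) 0 - (1 / 2) * max (w i j - α i j - α j i) 0

/-- `max_{k ∈ ∂i ∖ {j}} m_{k→i}` (max over the empty set is 0). -/
noncomputable def bestAlt {V : Type*} [Fintype V] [DecidableEq V]
    (Adj : V → V → Prop) [DecidableRel Adj] (w α : V → V → ℝ) (i j : V) : ℝ :=
  (Finset.univ.filter fun k => Adj i k ∧ k ≠ j).fold max 0 fun k => offer w α k i

/-- Earnings `γ_i = max_{k ∈ ∂i} m_{k→i}` (max over the empty set is 0). -/
noncomputable def earn {V : Type*} [Fintype V]
    (Adj : V → V → Prop) [DecidableRel Adj] (w α : V → V → ℝ) (i : V) : ℝ :=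
  (Finset.univ.filter fun k => Adj i k).fold max 0 fun k => offer w α k i

/-- One step of the natural dynamics with damping factor `κ`:
`α'_{i→j} = κ · max_{k∈∂i∖{j}} m_{k→i} + (1−κ) · α_{i→j}`. -/
noncomputable def step {V : Type*} [Fintype V] [DecidableEq V]
    (Adj : V → V → Prop) [DecidableRel Adj] (w : V → V → ℝ) (κ : ℝ)
    (α : V → V → ℝ) : V → V → ℝ :=
  fun i j => κ * bestAlt Adj w α i j + (1 - κ) * α i j

/-- A fixed point of the natural dynamics: the message vector is unchanged by the update. -/
def IsFixedPoint {V : Type*} [Fintype V] [DecidableEq V]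
    (Adj : V → V → Prop) [DecidableRel Adj] (w : V → V → ℝ) (κ : ℝ)
    (α : V → V → ℝ) : Prop :=
  ∀ i j, Adj i j → step Adj w κ α i j = α i j

/-- `W`, the maximum edge weight. -/
noncomputable def maxW {V : Type*} [Fintype V]
    (Adj : V → V → Prop) [DecidableRel Adj] (w : V → V → ℝ) : ℝ :=
  ((Finset.univ ×ˢ Finset.univ).filter fun p : V × V => Adj p.1 p.2).fold max 0
    fun p => w p.1 p.2

/-- A valid message vector: `α ∈ [0, W]^{2|E|}`. -/
def ValidMsg {V : Type*} [Fintype V]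
    (Adj : V → V → Prop) [DecidableRel Adj] (w : V → V → ℝ) (α : V → V → ℝ) : Prop :=
  ∀ i j, Adj i j → α i j ∈ Set.Icc (0 : ℝ) (maxW Adj w)

/-- `G = (V, E)` is a finite simple graph with symmetric positive edge weights. -/
def GoodGraph {V : Type*} (Adj : V → V → Prop) (w : V → V → ℝ) : Prop :=
  (∀ i j, Adj i j → Adj j i) ∧ (∀ i, ¬Adj i i) ∧ (∀ i j, w i j = w j i) ∧
  (∀ i j, Adj i j → 0 < w i j)

/-- `G` is bipartite with buyers `isB` and sellers the complement: every edge joins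
a buyer and a seller. -/
def Bipartite {V : Type*} (Adj : V → V → Prop) (isB : V → Prop) : Prop :=
  ∀ i j, Adj i j → (isB i ↔ ¬isB j)

/-- The bipartite partial ordering `α ⪰ β`: for every edge `(i, j')` with `i` a buyer
and `j'` a seller, `α_{i→j'} ≥ β_{i→j'}` and `α_{j'→i} ≤ β_{j'→i}`. -/
def DomGE {V : Type*} (Adj : V → V → Prop) (isB : V → Prop) (α β : V → V → ℝ) : Prop :=
  ∀ i j, Adj i j → isB i → ¬isB j → β i j ≤ α i j ∧ α j i ≤ β j i

/-!
Write `α ⪯ β` when `β` is at least `α` on buyer-to-seller messages and at most `α` on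
seller-to-buyer messages. An offer `m_{k→i}` decreases in `α_{k→i}` and increases in `α_{i→k}`,
so on a bipartite graph the update is monotone for `⪯`. As `α^top` is the top of
`[0,W]^{2|E|}`, the iterates from `α^top` decrease, so every coordinate is monotone and bounded,
hence convergent, and by continuity of the update the limit is a fixed point. A fixed point
`α*` lies below `α^top`, so by monotonicity below every iterate, hence below the limit.
-/

lemma Finset.fold_max_mono {ι α : Type*} [LinearOrder α] {s : Finset ι} {b : α} {f g : ι → α}
    (h : ∀ x ∈ s, f x ≤ g x) : s.fold max b f ≤ s.fold max b g :=
  (fold_max_le _).2 ⟨(le_fold_max _).2 (Or.inl le_rfl),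
    fun x hx => (h x hx).trans ((le_fold_max _).2 (Or.inr ⟨x, hx, le_rfl⟩))⟩

lemma Filter.Tendsto.finset_fold_max {ι κ α : Type*} [LinearOrder α] [TopologicalSpace α]
    [OrderClosedTopology α] {l : Filter κ} (s : Finset ι) {b : α} {F : κ → ι → α} {f : ι → α}
    (h : ∀ x ∈ s, Tendsto (fun t => F t x) l (𝓝 (f x))) :
    Tendsto (fun t => s.fold max b (F t)) l (𝓝 (s.fold max b f)) := by
  classical
  induction s using Finset.induction_on with
  | empty => exact tendsto_const_nhds
  | insert x s hx ih =>
    simp only [fold_insert hx]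
    exact (h x (mem_insert_self x s)).max (ih fun y hy => h y (mem_insert_of_mem hy))

section Offer

variable {V : Type*} {w α β : V → V → ℝ} {k i : V}

lemma offer_le_offer (hki : β k i ≤ α k i) (hik : α i k ≤ β i k) (hα : 0 ≤ α i k) :
    offer w α k i ≤ offer w β k i := by
  unfold offer
  rw [max_def, max_def, max_def, max_def]
  split_ifs <;> linarith

lemma offer_le {c : ℝ} (hα : 0 ≤ α k i) (hw : w k i ≤ c) (hc : 0 ≤ c) : offer w α k i ≤ c := by
  have hpos : 0 ≤ max (w k i - α k i - α i k) 0 := le_max_right _ _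
  have hle : max (w k i - α k i) 0 ≤ c := max_le (by linarith) hc
  unfold offer
  linarith

lemma Filter.Tendsto.offer {ι : Type*} {l : Filter ι} {A : ι → V → V → ℝ}
    (hki : Tendsto (fun t => A t k i) l (𝓝 (α k i)))
    (hik : Tendsto (fun t => A t i k) l (𝓝 (α i k))) :
    Tendsto (fun t => offer w (A t) k i) l (𝓝 (offer w α k i)) :=
  ((tendsto_const_nhds.sub hki).max tendsto_const_nhds).sub
    ((((tendsto_const_nhds.sub hki).sub hik).max tendsto_const_nhds).const_mul _)

end Offer

section Dynamics

variable {V : Type*} [Fintype V] {Adj : V → V → Prop} [DecidableRel Adj] {w : V → V → ℝ}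

lemma maxW_nonneg : 0 ≤ maxW Adj w :=
  (le_fold_max _).2 (Or.inl le_rfl)

lemma le_maxW {i j : V} (h : Adj i j) : w i j ≤ maxW Adj w :=
  (le_fold_max _).2 (Or.inr ⟨(i, j), by simp [h], le_rfl⟩)

variable [DecidableEq V] {κ : ℝ} {α β : V → V → ℝ}

lemma bestAlt_nonneg (i j : V) : 0 ≤ bestAlt Adj w α i j :=
  (le_fold_max _).2 (Or.inl le_rfl)

lemma bestAlt_le_maxW (hAdj : ∀ i j, Adj i j → Adj j i) (hα : ValidMsg Adj w α) (i j : V) :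
    bestAlt Adj w α i j ≤ maxW Adj w := by
  refine (fold_max_le _).2 ⟨maxW_nonneg, fun k hk => ?_⟩
  have hki : Adj k i := hAdj _ _ (mem_filter.1 hk).2.1
  exact offer_le (hα k i hki).1 (le_maxW hki) maxW_nonneg

lemma bestAlt_le_bestAlt {i j : V} (h : ∀ k, Adj i k → offer w α k i ≤ offer w β k i) :
    bestAlt Adj w α i j ≤ bestAlt Adj w β i j :=
  fold_max_mono fun k hk => h k (mem_filter.1 hk).2.1

lemma tendsto_bestAlt {ι : Type*} {l : Filter ι} {A : ι → V → V → ℝ}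
    (hAdj : ∀ i j, Adj i j → Adj j i)
    (h : ∀ i j, Adj i j → Tendsto (fun t => A t i j) l (𝓝 (α i j))) (i j : V) :
    Tendsto (fun t => bestAlt Adj w (A t) i j) l (𝓝 (bestAlt Adj w α i j)) :=
  Tendsto.finset_fold_max _ fun k hk =>
    have hik : Adj i k := (mem_filter.1 hk).2.1
    (h k i (hAdj _ _ hik)).offer (h i k hik)

lemma step_le_step (hκ : κ ∈ Set.Icc (0 : ℝ) 1) {i j : V}
    (hb : bestAlt Adj w α i j ≤ bestAlt Adj w β i j) (h : α i j ≤ β i j) :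
    step Adj w κ α i j ≤ step Adj w κ β i j :=
  add_le_add (mul_le_mul_of_nonneg_left hb hκ.1)
    (mul_le_mul_of_nonneg_left h (sub_nonneg.2 hκ.2))

lemma validMsg_step (hAdj : ∀ i j, Adj i j → Adj j i) (hκ : κ ∈ Set.Icc (0 : ℝ) 1)
    (hα : ValidMsg Adj w α) : ValidMsg Adj w (step Adj w κ α) := fun i j hij =>
  convex_Icc 0 (maxW Adj w) ⟨bestAlt_nonneg i j, bestAlt_le_maxW hAdj hα i j⟩ (hα i j hij)
    hκ.1 (sub_nonneg.2 hκ.2) (add_sub_cancel κ 1)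

lemma validMsg_iterate (hAdj : ∀ i j, Adj i j → Adj j i) (hκ : κ ∈ Set.Icc (0 : ℝ) 1)
    (hα : ValidMsg Adj w α) (t : ℕ) : ValidMsg Adj w ((step Adj w κ)^[t] α) := by
  induction t with
  | zero => exact hα
  | succ t ih =>
    rw [Function.iterate_succ_apply']
    exact validMsg_step hAdj hκ ih

lemma isFixedPoint_of_tendsto_iterate (hAdj : ∀ i j, Adj i j → Adj j i) {α₀ : V → V → ℝ}
    (h : ∀ i j, Adj i j →
      Tendsto (fun t => (step Adj w κ)^[t] α₀ i j) atTop (𝓝 (α i j))) :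
    IsFixedPoint Adj w κ α := by
  intro i j hij
  have hsucc : Tendsto (fun t => (step Adj w κ)^[t + 1] α₀ i j) atTop
      (𝓝 (step Adj w κ α i j)) := by
    simp only [Function.iterate_succ_apply']
    exact ((tendsto_bestAlt hAdj h i j).const_mul κ).add ((h i j hij).const_mul (1 - κ))
  exact tendsto_nhds_unique hsucc ((h i j hij).comp (tendsto_add_atTop_nat 1))

end Dynamics

section BipartiteOrder

variable {V : Type*} {Adj : V → V → Prop} {isB : V → Prop} {α β : V → V → ℝ}

/-- `α ⪯ β`, i.e. `DomGE Adj isB β α`, stated on every directed edge according to the side of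
its source. -/
def MsgLE (Adj : V → V → Prop) (isB : V → Prop) (α β : V → V → ℝ) : Prop :=
  ∀ i j, Adj i j → (isB i → α i j ≤ β i j) ∧ (¬isB i → β i j ≤ α i j)

lemma MsgLE.domGE (hAdj : ∀ i j, Adj i j → Adj j i) (h : MsgLE Adj isB β α) : DomGE Adj isB α β :=
  fun i j hij hi hj => ⟨(h i j hij).1 hi, (h j i (hAdj _ _ hij)).2 hj⟩

lemma msgLE_of_tendsto {A : ℕ → V → V → ℝ} (hle : ∀ t, MsgLE Adj isB β (A t))
    (hlim : ∀ i j, Adj i j → Tendsto (fun t => A t i j) atTop (𝓝 (α i j))) :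
    MsgLE Adj isB β α := fun i j hij =>
  ⟨fun hi => ge_of_tendsto' (hlim i j hij) fun t => (hle t i j hij).1 hi,
    fun hi => le_of_tendsto' (hlim i j hij) fun t => (hle t i j hij).2 hi⟩

variable [Fintype V] [DecidableRel Adj] {w : V → V → ℝ}

lemma exists_tendsto_of_msgLE_succ {A : ℕ → V → V → ℝ} (hA : ∀ t, ValidMsg Adj w (A t))
    (hdec : ∀ t, MsgLE Adj isB (A (t + 1)) (A t)) :
    ∃ α : V → V → ℝ, ∀ i j, Adj i j → Tendsto (fun t => A t i j) atTop (𝓝 (α i j)) := by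
  classical
  refine ⟨fun i j => if isB i then ⨅ t, A t i j else ⨆ t, A t i j, fun i j hij => ?_⟩
  by_cases hi : isB i
  · simp only [hi, if_true]
    exact tendsto_atTop_ciInf (antitone_nat_of_succ_le fun t => (hdec t i j hij).1 hi)
      ⟨0, Set.forall_mem_range.2 fun t => (hA t i j hij).1⟩
  · simp only [hi, if_false]
    exact tendsto_atTop_ciSup (monotone_nat_of_le_succ fun t => (hdec t i j hij).2 hi)
      ⟨maxW Adj w, Set.forall_mem_range.2 fun t => (hA t i j hij).2⟩

section Step

variable [DecidableEq V] {κ : ℝ}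

lemma msgLE_step (hAdj : ∀ i j, Adj i j → Adj j i) (hbip : Bipartite Adj isB)
    (hκ : κ ∈ Set.Icc (0 : ℝ) 1) (h : MsgLE Adj isB α β)
    (hα : ∀ i j, Adj i j → 0 ≤ α i j) (hβ : ∀ i j, Adj i j → 0 ≤ β i j) :
    MsgLE Adj isB (step Adj w κ α) (step Adj w κ β) := by
  intro i j hij
  constructor
  · intro hi
    refine step_le_step hκ (bestAlt_le_bestAlt fun k hik => ?_) ((h i j hij).1 hi)
    exact offer_le_offer ((h k i (hAdj _ _ hik)).2 ((hbip i k hik).1 hi)) ((h i k hik).1 hi)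
      (hα i k hik)
  · intro hi
    refine step_le_step hκ (bestAlt_le_bestAlt fun k hik => ?_) ((h i j hij).2 hi)
    have hk : isB k := not_not.1 fun hk => hi ((hbip i k hik).2 hk)
    exact offer_le_offer ((h k i (hAdj _ _ hik)).1 hk) ((h i k hik).2 hi) (hβ i k hik)

end Step

variable [DecidablePred isB]

noncomputable def topMsg (Adj : V → V → Prop) [DecidableRel Adj] (w : V → V → ℝ) (isB : V → Prop)
    [DecidablePred isB] : V → V → ℝ :=
  fun a _ => if isB a then maxW Adj w else 0

lemma validMsg_topMsg : ValidMsg Adj w (topMsg Adj w isB) := fun i _ _ => by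
  unfold topMsg
  split_ifs
  exacts [⟨maxW_nonneg, le_rfl⟩, ⟨le_rfl, maxW_nonneg⟩]

lemma ValidMsg.msgLE_topMsg (hα : ValidMsg Adj w α) : MsgLE Adj isB α (topMsg Adj w isB) :=
  fun i j hij => ⟨fun hi => by simpa [topMsg, hi] using (hα i j hij).2,
    fun hi => by simpa [topMsg, hi] using (hα i j hij).1⟩

variable [DecidableEq V] {κ : ℝ}

lemma validMsg_iterate_topMsg (hAdj : ∀ i j, Adj i j → Adj j i) (hκ : κ ∈ Set.Icc (0 : ℝ) 1)
    (t : ℕ) : ValidMsg Adj w ((step Adj w κ)^[t] (topMsg Adj w isB)) :=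
  validMsg_iterate hAdj hκ validMsg_topMsg t

lemma iterate_succ_topMsg_msgLE (hAdj : ∀ i j, Adj i j → Adj j i) (hbip : Bipartite Adj isB)
    (hκ : κ ∈ Set.Icc (0 : ℝ) 1) (t : ℕ) :
    MsgLE Adj isB ((step Adj w κ)^[t + 1] (topMsg Adj w isB))
      ((step Adj w κ)^[t] (topMsg Adj w isB)) := by
  have hvalid := validMsg_iterate_topMsg (w := w) (isB := isB) hAdj hκ
  induction t with
  | zero => exact (hvalid 1).msgLE_topMsg
  | succ t ih =>
    have hnext := msgLE_step (w := w) hAdj hbip hκ ih (fun i j h => (hvalid (t + 1) i j h).1)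
      fun i j h => (hvalid t i j h).1
    simpa only [Function.iterate_succ_apply'] using hnext

lemma IsFixedPoint.msgLE_iterate_topMsg (hAdj : ∀ i j, Adj i j → Adj j i) (hbip : Bipartite Adj isB)
    (hκ : κ ∈ Set.Icc (0 : ℝ) 1) (hfix : IsFixedPoint Adj w κ α) (hα : ValidMsg Adj w α)
    (t : ℕ) : MsgLE Adj isB α ((step Adj w κ)^[t] (topMsg Adj w isB)) := by
  induction t with
  | zero => exact hα.msgLE_topMsg
  | succ t ih =>
    have hvalid := validMsg_iterate_topMsg (w := w) (isB := isB) hAdj hκ t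
    have hnext := msgLE_step (w := w) hAdj hbip hκ ih (fun i j h => (hα i j h).1)
      fun i j h => (hvalid i j h).1
    intro i j hij
    rw [Function.iterate_succ_apply']
    simpa only [hfix i j hij] using hnext i j hij

end BipartiteOrder

/-- On a bipartite graph, the natural dynamics started from `α^top`
(`α^top_{i→j'} = W` for buyers `i`, `α^top_{j'→i} = 0` for sellers `j'`) converges
to a fixed point `α^{*,up}` that dominates every fixed point in `[0,W]^{2|E|}`
in the bipartite partial ordering. -/
theorem stmt6 {V : Type*} [Fintype V] [DecidableEq V]
    (Adj : V → V → Prop) [DecidableRel Adj] (w : V → V → ℝ)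
    (hG : GoodGraph Adj w) (isB : V → Prop) [DecidablePred isB]
    (hbip : Bipartite Adj isB)
    (κ : ℝ) (hκ : κ ∈ Set.Ioo (0 : ℝ) 1) :
    ∃ αup : V → V → ℝ, IsFixedPoint Adj w κ αup ∧
      (∀ i j, Adj i j →
        Filter.Tendsto
          (fun t : ℕ =>
            (step Adj w κ)^[t] (fun a _ => if isB a then maxW Adj w else 0) i j)
          Filter.atTop (nhds (αup i j))) ∧
      (∀ αstar : V → V → ℝ, ValidMsg Adj w αstar → IsFixedPoint Adj w κ αstar →
        DomGE Adj isB αup αstar) := by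
  have hAdj : ∀ i j, Adj i j → Adj j i := hG.1
  have hκ' : κ ∈ Set.Icc (0 : ℝ) 1 := Set.Ioo_subset_Icc_self hκ
  obtain ⟨αup, hlim⟩ := exists_tendsto_of_msgLE_succ
    (validMsg_iterate_topMsg (isB := isB) hAdj hκ') (iterate_succ_topMsg_msgLE hAdj hbip hκ')
  refine ⟨αup, isFixedPoint_of_tendsto_iterate hAdj hlim, hlim, fun αstar hvalid hfix => ?_⟩
  exact (msgLE_of_tendsto (hfix.msgLE_iterate_topMsg hAdj hbip hκ' hvalid) hlim).domGE hAdj
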